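/- arXiv:2206.08012 — 2 statements merged into one kernel-verified Lean document; each statement's English description precedes it below -/
import Mathlib

section
/- The sets 𝐑_min and 𝐍𝐑 are finite; indeed every 𝐦 ∈ 𝐑_min ∪ 𝐍𝐑 satisfies ‖𝐦‖ ≤ M. -/
open scoped BigOperators

/-- The dot product 𝐦·λ = Σⱼ (m₊ⱼ − m₋ⱼ)λⱼ. -/
def mdot {N : ℕ} (lam : Fin N → ℝ) (m : (Fin N → ℕ) × (Fin N → ℕ)) : ℝ :=
  ∑ j, ((m.1 j : ℝ) - (m.2 j : ℝ)) * lam j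

/-- The norm ‖𝐦‖ = Σⱼ (m₊ⱼ + m₋ⱼ). -/
def mnorm {N : ℕ} (m : (Fin N → ℕ) × (Fin N → ℕ)) : ℕ :=
  ∑ j, (m.1 j + m.2 j)

/-- The relation 𝐧 ≺ 𝐦. -/
def prec {N : ℕ} (n m : (Fin N → ℕ) × (Fin N → ℕ)) : Prop :=
  (∀ j, n.1 j + n.2 j ≤ m.1 j + m.2 j) ∧ mnorm n < mnorm m

/-- The resonant set 𝐑 = {𝐦 : |𝐦·λ| > m}. -/
def Rset {N : ℕ} (lam : Fin N → ℝ) (mass : ℝ) : Set ((Fin N → ℕ) × (Fin N → ℕ)) :=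
  {m | |mdot lam m| > mass}

/-- The minimal resonant set 𝐑_min. -/
def Rmin {N : ℕ} (lam : Fin N → ℝ) (mass : ℝ) : Set ((Fin N → ℕ) × (Fin N → ℕ)) :=
  {m | m ∈ Rset lam mass ∧ ∀ n ∈ Rset lam mass, ¬ prec n m}

/-- The set 𝐈 = {𝐦 : ∃ 𝐧 ∈ 𝐑_min, 𝐧 ≺ 𝐦}. -/
def Iset {N : ℕ} (lam : Fin N → ℝ) (mass : ℝ) : Set ((Fin N → ℕ) × (Fin N → ℕ)) :=
  {m | ∃ n ∈ Rmin lam mass, prec n m}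

/-- The non-resonant set 𝐍𝐑 = ℕ₀^{2N} ∖ (𝐑_min ∪ 𝐈). -/
def NRset {N : ℕ} (lam : Fin N → ℝ) (mass : ℝ) : Set ((Fin N → ℕ) × (Fin N → ℕ)) :=
  (Rmin lam mass ∪ Iset lam mass)ᶜ

/-! Above `M` nothing survives: below any `𝐦` with `‖𝐦‖ > M` sits a purely positive
multi-index `𝐧 ≺ 𝐦` with `‖𝐧‖ = M`, and `𝐧·λ ≥ M λ₁ ≥ m`, with equality excluded by genericity,
so `𝐧 ∈ 𝐑`. Since `≺` is well founded, some element of `𝐑_min` lies below `𝐧`, hence below `𝐦`,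
so `𝐦 ∈ 𝐈`. Finiteness follows because `‖𝐦‖ ≤ M` leaves finitely many multi-indices. -/

theorem Fintype.exists_le_sum_eq {ι : Type*} [Fintype ι] (s : ι → ℕ) :
    ∀ {M : ℕ}, M ≤ ∑ i, s i → ∃ t ≤ s, ∑ i, t i = M
  | 0, _ => ⟨0, fun _ => Nat.zero_le _, by simp⟩
  | M + 1, h => by
    classical
    obtain ⟨t, hts, ht⟩ := Fintype.exists_le_sum_eq s (M := M) (by omega)
    obtain ⟨j, -, hj⟩ :=
      Finset.exists_lt_of_sum_lt (s := Finset.univ) (by omega : ∑ i, t i < ∑ i, s i)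
    refine ⟨t + Pi.single j 1, fun i => ?_, ?_⟩
    · rcases eq_or_ne i j with rfl | hij
      · simpa using hj
      · simpa [hij] using hts i
    · simp [Finset.sum_add_distrib, ht]

section

variable {N : ℕ}

theorem prec.trans {a b c : (Fin N → ℕ) × (Fin N → ℕ)} (hab : prec a b) (hbc : prec b c) :
    prec a c :=
  ⟨fun j => (hab.1 j).trans (hbc.1 j), hab.2.trans hbc.2⟩

theorem prec_wellFounded : WellFounded (@prec N) :=
  Subrelation.wf (fun h => h.2) (InvImage.wf mnorm wellFounded_lt)

theorem finite_setOf_mnorm_le (M : ℕ) :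
    {m : (Fin N → ℕ) × (Fin N → ℕ) | mnorm m ≤ M}.Finite := by
  refine ((Set.finite_Iic fun _ => M).prod (Set.finite_Iic fun _ => M)).subset fun m hm => ?_
  have hj (j : Fin N) : m.1 j + m.2 j ≤ M :=
    (Finset.single_le_sum (f := fun j => m.1 j + m.2 j) (by simp) (Finset.mem_univ j)).trans hm
  exact ⟨fun j => (Nat.le_add_right _ _).trans (hj j), fun j => (Nat.le_add_left _ _).trans (hj j)⟩

theorem mnorm_mul_le_mdot {lam : Fin N → ℝ} {c : ℝ} (hc : ∀ j, c ≤ lam j) (t : Fin N → ℕ) :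
    (mnorm (t, 0) : ℝ) * c ≤ mdot lam (t, 0) := by
  simp only [mnorm, mdot, Pi.zero_apply, add_zero, Nat.cast_sum, Nat.cast_zero, sub_zero,
    Finset.sum_mul]
  gcongr with j
  exact hc j

theorem exists_mem_Rmin_prec {lam : Fin N → ℝ} {mass : ℝ} {n m : (Fin N → ℕ) × (Fin N → ℕ)}
    (hn : n ∈ Rset lam mass) (hnm : prec n m) : ∃ k ∈ Rmin lam mass, prec k m := by
  obtain ⟨k, ⟨hk, hkm⟩, hmin⟩ :=
    prec_wellFounded.has_min {k | k ∈ Rset lam mass ∧ prec k m} ⟨n, hn, hnm⟩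
  exact ⟨k, ⟨hk, fun x hx hxk => hmin x ⟨hx, hxk.trans hkm⟩ hxk⟩, hkm⟩

theorem notMem_Rmin_union_NRset_of_prec {lam : Fin N → ℝ} {mass : ℝ}
    {k m : (Fin N → ℕ) × (Fin N → ℕ)}
    (hk : k ∈ Rmin lam mass) (hkm : prec k m) : m ∉ Rmin lam mass ∪ NRset lam mass := by
  rintro (hm | hm)
  · exact hm.2 k hk.1 hkm
  · exact hm (Or.inr ⟨k, hk, hkm⟩)

theorem exists_mem_Rset_prec_of_lt_mnorm {lam : Fin N → ℝ} {mass c : ℝ} {M : ℕ}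
    (hc : ∀ j, c ≤ lam j) (hM : mass ≤ M * c)
    (hgen : ∀ n : (Fin N → ℕ) × (Fin N → ℕ), mnorm n ≤ M → (mdot lam n) ^ 2 ≠ mass ^ 2)
    {m : (Fin N → ℕ) × (Fin N → ℕ)} (hm : M < mnorm m) : ∃ n ∈ Rset lam mass, prec n m := by
  obtain ⟨t, htm, ht⟩ := Fintype.exists_le_sum_eq (fun j => m.1 j + m.2 j) hm.le
  have hnorm : mnorm (t, 0) = M := by simpa [mnorm] using ht
  have hge : mass ≤ mdot lam (t, 0) := hM.trans (hnorm ▸ mnorm_mul_le_mdot hc t)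
  have hne : mdot lam (t, 0) ≠ mass := fun h => hgen _ hnorm.le (by rw [h])
  refine ⟨(t, 0), (lt_of_le_of_ne hge hne.symm).trans_le (le_abs_self _), ?_, by omega⟩
  intro j
  simpa using htm j

end

theorem Rmin_union_NR_finite_general {N : ℕ} (hN : 0 < N) (lam : Fin N → ℝ) (mass : ℝ)
    (hmono : StrictMono lam)
    (M : ℕ)
    (hM2 : mass ≤ (M : ℝ) * lam ⟨0, hN⟩)
    (hgen : ∀ m : (Fin N → ℕ) × (Fin N → ℕ), mnorm m ≤ M → (mdot lam m) ^ 2 ≠ mass ^ 2) :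
    (Rmin lam mass ∪ NRset lam mass).Finite ∧
      ∀ m ∈ Rmin lam mass ∪ NRset lam mass, mnorm m ≤ M := by
  have hlam : ∀ j, lam ⟨0, hN⟩ ≤ lam j := fun j => hmono.monotone (Nat.zero_le j)
  have bound : ∀ m ∈ Rmin lam mass ∪ NRset lam mass, mnorm m ≤ M := by
    intro m hm
    by_contra! hM
    obtain ⟨n, hn, hnm⟩ := exists_mem_Rset_prec_of_lt_mnorm hlam hM2 hgen hM
    obtain ⟨k, hk, hkm⟩ := exists_mem_Rmin_prec hn hnm
    exact notMem_Rmin_union_NRset_of_prec hk hkm hm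
  exact ⟨(finite_setOf_mnorm_le M).subset bound, bound⟩

/-- 𝐑_min and 𝐍𝐑 are finite: every element of 𝐑_min ∪ 𝐍𝐑 has norm ≤ M. -/
theorem Rmin_union_NR_finite {N : ℕ} (hN : 0 < N) (lam : Fin N → ℝ) (mass : ℝ)
    (hmass : 0 < mass)
    (hpos : ∀ j, 0 < lam j)
    (hmono : StrictMono lam)
    (hlt : ∀ j, lam j < mass)
    (M : ℕ)
    (hM1 : ((M : ℝ) - 1) * lam ⟨0, hN⟩ < mass)
    (hM2 : mass ≤ (M : ℝ) * lam ⟨0, hN⟩)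
    (hgen : ∀ m : (Fin N → ℕ) × (Fin N → ℕ), mnorm m ≤ M → (mdot lam m) ^ 2 ≠ mass ^ 2) :
    (Rmin lam mass ∪ NRset lam mass).Finite ∧
      ∀ m ∈ Rmin lam mass ∪ NRset lam mass, mnorm m ≤ M :=
  Rmin_union_NR_finite_general hN lam mass hmono M hM2 hgen
end

section
/- For every κ > 0 there exists a constant C > 0, depending only on κ, such that for every A ≥ 1 and every continuously differentiable f : ℝ → ℝ with f' ∈ L²(ℝ), one has ∫_ℝ sech(2x/A)² f(x)² dx ≤ C·( A²·‖f'‖²_{L²(ℝ)} + A·∫_ℝ sech(κx)² f(x)² dx ). -/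
/-! Write `D = ‖f'‖²` and let `y₀` minimise `f ^ 2` on `[0, 1]`. The fundamental theorem of
calculus and Cauchy–Schwarz give `f x ^ 2 ≤ 2 f y₀ ^ 2 + 2 D (|x| + 1)`. Since
`sech (2x/A) ^ 2 ≤ 4 exp (-4|x|/A)` and `(|x| + 1) exp (-|x|/A) ≤ A`, the left-hand side is at most
`8 (f y₀ ^ 2 + A D) ∫ exp (-2|x|/A) = 8 A f y₀ ^ 2 + 8 A² D`. Finally `sech (κx) ≥ sech κ` on
`[0, 1]`, so `f y₀ ^ 2 ≤ cosh κ ^ 2 ∫ sech (κx) ^ 2 f x ^ 2`. -/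

open MeasureTheory Set Real

theorem sq_integral_le_measureReal_univ_mul_integral_sq {α : Type*} [MeasurableSpace α]
    {μ : Measure α} [IsFiniteMeasure μ] {g : α → ℝ} (hg : MemLp g 2 μ) :
    (∫ x, g x ∂μ) ^ 2 ≤ μ.real univ * ∫ x, g x ^ 2 ∂μ := by
  rcases eq_zero_or_neZero μ with rfl | hμ
  · simp
  have hL : 0 < μ.real univ := by
    simp [measureReal_def, ENNReal.toReal_pos_iff, measure_lt_top, NeZero.ne μ]
  have jensen := even_two.convexOn_pow.map_average_le (continuousOn_pow 2) isClosed_univ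
    (by simp) (hg.integrable one_le_two) hg.integrable_sq
  simp only [average_eq, smul_eq_mul] at jensen
  rw [mul_pow, inv_pow, ← div_eq_inv_mul, ← div_eq_inv_mul,
    div_le_div_iff₀ (by positivity) hL] at jensen
  exact le_of_mul_le_mul_right (by linarith) hL

theorem inv_cosh_le_two_mul_exp_neg_abs (t : ℝ) : (cosh t)⁻¹ ≤ 2 * exp (-|t|) := by
  rw [exp_neg, ← div_eq_mul_inv, inv_le_comm₀ (cosh_pos t) (by positivity), inv_div, cosh_eq]
  have := exp_abs_le t
  linarith

theorem integrable_exp_neg_mul_abs {c : ℝ} (hc : 0 < c) :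
    Integrable fun x => exp (-(c * |x|)) := by
  rw [← integrableOn_univ, ← Iic_union_Ioi (a := 0)]
  refine IntegrableOn.union
    ((integrableOn_exp_mul_Iic hc 0).congr_fun (fun x hx => ?_) measurableSet_Iic)
    ((integrableOn_exp_mul_Ioi (neg_neg_of_pos hc) 0).congr_fun (fun x hx => ?_) measurableSet_Ioi)
  · rw [abs_of_nonpos hx]; ring_nf
  · rw [abs_of_pos hx]; ring_nf

theorem lintegral_exp_neg_mul_abs {c : ℝ} (hc : 0 < c) :
    ∫⁻ x, ENNReal.ofReal (exp (-(c * |x|))) = ENNReal.ofReal (2 / c) := by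
  rw [← ofReal_integral_eq_lintegral_ofReal (integrable_exp_neg_mul_abs hc)
    (.of_forall fun _ => (exp_pos _).le), integral_comp_abs (f := fun t => exp (-(c * t)))]
  simp_rw [← neg_mul]
  rw [integral_exp_mul_Ioi (neg_neg_of_pos hc)]
  congr 1; field_simp; simp

theorem sq_intervalIntegral_le_abs_sub_mul_integral_sq {g : ℝ → ℝ} (hg : MemLp g 2) (a b : ℝ) :
    (∫ t in a..b, g t) ^ 2 ≤ |b - a| * ∫ t, g t ^ 2 := by
  have : IsFiniteMeasure (volume.restrict (uIoc a b)) := by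
    rw [isFiniteMeasure_restrict, volume_uIoc]; exact ENNReal.ofReal_ne_top
  calc (∫ t in a..b, g t) ^ 2 = (∫ t in uIoc a b, g t) ^ 2 := by
        rw [← sq_abs, intervalIntegral.abs_integral_eq_abs_integral_uIoc, sq_abs]
    _ ≤ |b - a| * ∫ t in uIoc a b, g t ^ 2 := by
        simpa [Measure.real, volume_uIoc] using
          sq_integral_le_measureReal_univ_mul_integral_sq (hg.restrict (uIoc a b))
    _ ≤ |b - a| * ∫ t, g t ^ 2 := by
        refine mul_le_mul_of_nonneg_left ?_ (abs_nonneg _)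
        exact setIntegral_le_integral hg.integrable_sq (.of_forall fun _ => sq_nonneg _)

theorem sq_sub_le_abs_sub_mul_integral_deriv_sq {f : ℝ → ℝ} (hf : ContDiff ℝ 1 f)
    (hf' : Integrable fun x => deriv f x ^ 2) (x y : ℝ) :
    (f x - f y) ^ 2 ≤ |x - y| * ∫ t, deriv f t ^ 2 := by
  have hcont : Continuous (deriv f) := hf.continuous_deriv le_rfl
  rw [← intervalIntegral.integral_deriv_eq_sub
    (fun t _ => (hf.differentiable one_ne_zero).differentiableAt) (hcont.intervalIntegrable y x)]
  exact sq_intervalIntegral_le_abs_sub_mul_integral_sq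
    ((memLp_two_iff_integrable_sq hcont.aestronglyMeasurable).2 hf') y x

theorem sq_le_two_mul_sq_add_two_mul_abs_sub_mul_integral_deriv_sq {f : ℝ → ℝ}
    (hf : ContDiff ℝ 1 f) (hf' : Integrable fun x => deriv f x ^ 2) (x y : ℝ) :
    f x ^ 2 ≤ 2 * f y ^ 2 + 2 * |x - y| * ∫ t, deriv f t ^ 2 := by
  have := add_sq_le (a := f y) (b := f x - f y)
  rw [add_sub_cancel] at this
  linarith [sq_sub_le_abs_sub_mul_integral_deriv_sq hf hf' x y]

theorem inv_cosh_sq_mul_add_mul_abs_le {A : ℝ} (hA : 1 ≤ A) {a b : ℝ} (ha : 0 ≤ a) (hb : 0 ≤ b)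
    (x : ℝ) :
    (cosh (2 * x / A))⁻¹ ^ 2 * (a + b * (|x| + 1)) ≤ 4 * (a + A * b) * exp (-(2 / A * |x|)) := by
  have hA0 : 0 < A := by linarith
  set u := exp (-(|x| / A)) with hu
  have hu0 : 0 < u := exp_pos _
  have hu1 : u ≤ 1 := exp_le_one_iff.2 (neg_nonpos.2 (by positivity))
  have hsech : (cosh (2 * x / A))⁻¹ ^ 2 ≤ 4 * u ^ 4 := by
    calc (cosh (2 * x / A))⁻¹ ^ 2 ≤ (2 * exp (-|2 * x / A|)) ^ 2 :=
          pow_le_pow_left₀ (by positivity) (inv_cosh_le_two_mul_exp_neg_abs _) 2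
      _ = 4 * u ^ 4 := by
          rw [hu, mul_pow, ← exp_nat_mul, ← exp_nat_mul, abs_div, abs_mul, abs_two,
            abs_of_pos hA0]
          ring_nf
  have hlin : u * (|x| + 1) ≤ A := by
    calc u * (|x| + 1) ≤ u * (A * (|x| / A + 1)) := by
          gcongr
          rw [mul_add, mul_div_cancel₀ _ hA0.ne']
          linarith
      _ ≤ u * (A * exp (|x| / A)) := by gcongr; exact add_one_le_exp _
      _ = A := by rw [hu, mul_left_comm, ← exp_add]; simp
  have hweight : exp (-(2 / A * |x|)) = u ^ 2 := by
    rw [hu, ← exp_nat_mul]; ring_nf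
  rw [hweight]
  calc (cosh (2 * x / A))⁻¹ ^ 2 * (a + b * (|x| + 1)) ≤ 4 * u ^ 4 * (a + b * (|x| + 1)) :=
        mul_le_mul_of_nonneg_right hsech (by positivity)
    _ = 4 * u ^ 2 * (u ^ 2 * a + u * b * (u * (|x| + 1))) := by ring
    _ ≤ 4 * u ^ 2 * (a + b * A) := by
        gcongr
        · exact mul_le_of_le_one_left ha (pow_le_one₀ hu0.le hu1)
        · nlinarith [mul_le_mul hu1 hlin (by positivity) zero_le_one]
    _ = 4 * (a + A * b) * u ^ 2 := by ring

theorem lintegral_inv_cosh_sq_mul_le {A : ℝ} (hA : 1 ≤ A) {g : ℝ → ℝ} {a b : ℝ} (ha : 0 ≤ a)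
    (hb : 0 ≤ b) (hg : ∀ x, g x ≤ a + b * (|x| + 1)) :
    ∫⁻ x, ENNReal.ofReal ((cosh (2 * x / A))⁻¹ ^ 2 * g x) ≤
      ENNReal.ofReal (4 * (a + A * b) * A) := by
  calc ∫⁻ x, ENNReal.ofReal ((cosh (2 * x / A))⁻¹ ^ 2 * g x)
      ≤ ∫⁻ x, ENNReal.ofReal (4 * (a + A * b)) * ENNReal.ofReal (exp (-(2 / A * |x|))) := by
        refine lintegral_mono fun x => ?_
        rw [← ENNReal.ofReal_mul (by positivity)]
        refine ENNReal.ofReal_le_ofReal (le_trans ?_ (inv_cosh_sq_mul_add_mul_abs_le hA ha hb x))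
        gcongr
        exact hg x
    _ = ENNReal.ofReal (4 * (a + A * b) * A) := by
        rw [lintegral_const_mul' _ _ ENNReal.ofReal_ne_top,
          lintegral_exp_neg_mul_abs (by positivity), ← ENNReal.ofReal_mul (by positivity)]
        field_simp

theorem ofReal_mul_le_lintegral_inv_cosh_sq_mul (κ : ℝ) {f : ℝ → ℝ} {m : ℝ}
    (hm : ∀ y ∈ Icc (0 : ℝ) 1, m ≤ f y ^ 2) :
    ENNReal.ofReal ((cosh κ)⁻¹ ^ 2 * m) ≤
      ∫⁻ x, ENNReal.ofReal ((cosh (κ * x))⁻¹ ^ 2 * f x ^ 2) := by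
  calc ENNReal.ofReal ((cosh κ)⁻¹ ^ 2 * m)
      = ∫⁻ x, (Icc (0 : ℝ) 1).indicator (fun _ => ENNReal.ofReal ((cosh κ)⁻¹ ^ 2 * m)) x := by
        rw [lintegral_indicator_const measurableSet_Icc, Real.volume_Icc]; simp
    _ ≤ ∫⁻ x, ENNReal.ofReal ((cosh (κ * x))⁻¹ ^ 2 * f x ^ 2) := by
        refine lintegral_mono (indicator_le fun y hy => ENNReal.ofReal_le_ofReal ?_)
        have hcosh : cosh (κ * y) ≤ cosh κ := by
          rw [cosh_le_cosh, abs_mul, abs_of_nonneg hy.1]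
          exact mul_le_of_le_one_right (abs_nonneg κ) hy.2
        calc (cosh κ)⁻¹ ^ 2 * m ≤ (cosh κ)⁻¹ ^ 2 * f y ^ 2 := by gcongr; exact hm y hy
          _ ≤ (cosh (κ * y))⁻¹ ^ 2 * f y ^ 2 := by
            gcongr

theorem sech_weight_comparison_general (κ : ℝ) :
    ∃ C > 0, ∀ A : ℝ, 1 ≤ A → ∀ f : ℝ → ℝ, ContDiff ℝ 1 f →
      Integrable (fun x => (deriv f x) ^ 2) →
      (∫⁻ x, ENNReal.ofReal (((Real.cosh (2 * x / A))⁻¹) ^ 2 * f x ^ 2)) ≤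
        ENNReal.ofReal C *
          (ENNReal.ofReal (A ^ 2) * (∫⁻ x, ENNReal.ofReal ((deriv f x) ^ 2)) +
            ENNReal.ofReal A *
              (∫⁻ x, ENNReal.ofReal (((Real.cosh (κ * x))⁻¹) ^ 2 * f x ^ 2))) := by
  refine ⟨8 * cosh κ ^ 2, by positivity, fun A hA f hf hf' => ?_⟩
  obtain ⟨y₀, hy₀, hmin⟩ := isCompact_Icc.exists_isMinOn (nonempty_Icc.2 zero_le_one)
    (hf.continuous.pow 2).continuousOn
  set m := f y₀ ^ 2
  set D := ∫ x, deriv f x ^ 2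
  have hD : 0 ≤ D := integral_nonneg fun _ => sq_nonneg _
  have hgrowth (x : ℝ) : f x ^ 2 ≤ 2 * m + 2 * D * (|x| + 1) := by
    have hdist : |x - y₀| ≤ |x| + 1 :=
      (abs_sub x y₀).trans (by rw [abs_of_nonneg hy₀.1]; linarith [hy₀.2])
    linarith [sq_le_two_mul_sq_add_two_mul_abs_sub_mul_integral_deriv_sq hf hf' x y₀,
      mul_le_mul_of_nonneg_left hdist hD]
  calc _ ≤ ENNReal.ofReal (4 * (2 * m + A * (2 * D)) * A) :=
        lintegral_inv_cosh_sq_mul_le hA (by positivity) (by positivity) hgrowth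
    _ ≤ ENNReal.ofReal (8 * cosh κ ^ 2 * (A ^ 2 * D + A * ((cosh κ)⁻¹ ^ 2 * m))) := by
        have hcancel : cosh κ ^ 2 * (cosh κ)⁻¹ ^ 2 = 1 := by field_simp
        have hK : 1 ≤ cosh κ ^ 2 := one_le_pow₀ (one_le_cosh κ)
        refine ENNReal.ofReal_le_ofReal ?_
        rw [show 8 * cosh κ ^ 2 * (A ^ 2 * D + A * ((cosh κ)⁻¹ ^ 2 * m))
            = 8 * A ^ 2 * D * cosh κ ^ 2 + 8 * A * m by linear_combination 8 * A * m * hcancel]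
        nlinarith [le_mul_of_one_le_right (by positivity : 0 ≤ 8 * A ^ 2 * D) hK]
    _ = ENNReal.ofReal (8 * cosh κ ^ 2) * (ENNReal.ofReal (A ^ 2) * ENNReal.ofReal D +
          ENNReal.ofReal A * ENNReal.ofReal ((cosh κ)⁻¹ ^ 2 * m)) := by
        rw [ENNReal.ofReal_mul (p := 8 * cosh κ ^ 2) (by positivity),
          ENNReal.ofReal_add (by positivity) (by positivity),
          ENNReal.ofReal_mul (p := A ^ 2) (by positivity),
          ENNReal.ofReal_mul (p := A) (by linarith)]
    _ ≤ _ := by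
        rw [ofReal_integral_eq_lintegral_ofReal hf' (.of_forall fun _ => sq_nonneg _)]
        gcongr
        exact ofReal_mul_le_lintegral_inv_cosh_sq_mul κ hmin

/-- For every κ > 0 there is C > 0 such that for all A ≥ 1 and f ∈ C¹ with f' ∈ L²,
    ∫ sech(2x/A)² f² ≤ C·(A²·‖f'‖²_{L²} + A·∫ sech(κx)² f²). -/
theorem sech_weight_comparison (κ : ℝ) (hκ : 0 < κ) :
    ∃ C > 0, ∀ A : ℝ, 1 ≤ A → ∀ f : ℝ → ℝ, ContDiff ℝ 1 f →
      Integrable (fun x => (deriv f x) ^ 2) →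
      (∫⁻ x, ENNReal.ofReal (((Real.cosh (2 * x / A))⁻¹) ^ 2 * f x ^ 2)) ≤
        ENNReal.ofReal C *
          (ENNReal.ofReal (A ^ 2) * (∫⁻ x, ENNReal.ofReal ((deriv f x) ^ 2)) +
            ENNReal.ofReal A *
              (∫⁻ x, ENNReal.ofReal (((Real.cosh (κ * x))⁻¹) ^ 2 * f x ^ 2))) :=
  sech_weight_comparison_general κ
end
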